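/- arXiv:2412.20952 — 5 statements merged into one kernel-verified Lean document; each statement's English description precedes it below -/
import Mathlib

section
/- Let H_{≥1} be the MZV shuffle Hopf algebra with coproduct Δ_{≥1} uniquely characterized by: Δ_{≥1}(1) = 1⊗1, Δ_{≥1}([1_k]) = Σ_{j=0}^k [1_j]⊗[1_{k−j}], and the shifted coderivation property (id ⊗̂ δ_i + δ_i ⊗ id)Δ_{≥1} = Δ_{≥1} δ_i for all i ≥ 1. Then the operator J_{≥1} (with J_{≥1}(1)=0, J_{≥1}([s_1,s]) = [s_1−1,s] if s_1>1 and 0 if s_1=1) is a coderivation: (id⊗J_{≥1} + J_{≥1}⊗id)Δ_{≥1} = Δ_{≥1} J_{≥1}. -/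
open Finsupp TensorProduct

noncomputable section

/-- The underlying space of the extended shuffle algebra: formal ℚ-linear
combinations of words (lists of integers); the empty word is the unit `1`. -/
abbrev W : Type := List ℤ →₀ ℚ

/-- The basis word `[s₁,…,s_k]` (the empty list is the unit `1`). -/
def wd (l : List ℤ) : W := Finsupp.single l 1

/-- A word has all entries nonpositive. -/
def NP (l : List ℤ) : Prop := ∀ a ∈ l, a ≤ 0

/-- A word has all entries positive. -/
def Pos (l : List ℤ) : Prop := ∀ a ∈ l, 1 ≤ a

/-- The operator `J : 1 ↦ 0, [s₁,s₂,…] ↦ [s₁-1,s₂,…]`. -/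
def Jop : W →ₗ[ℚ] W :=
  Finsupp.lsum ℚ fun l => match l with
    | [] => (0 : ℚ →ₗ[ℚ] W)
    | a :: s => Finsupp.lsingle ((a - 1) :: s)

/-- Prepending `a` to every word: `[a, w]`. -/
def pre (a : ℤ) : W →ₗ[ℚ] W := Finsupp.lmapDomain ℚ ℚ (List.cons a)

/-- Characterization of the extended shuffle product on `H_ℤ`. -/
structure IsExtShuffle (sh : W →ₗ[ℚ] W →ₗ[ℚ] W) : Prop where
  assoc : ∀ x y z : W, sh (sh x y) z = sh x (sh y z)
  one_mul : ∀ x : W, sh (wd []) x = x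
  mul_one : ∀ x : W, sh x (wd []) = x
  zero_mul_word : ∀ s : List ℤ, sh (wd [0]) (wd s) = wd (0 :: s)
  word_mul_zero : ∀ (a : ℤ) (s : List ℤ), 0 < a → sh (wd (a :: s)) (wd [0]) = wd (0 :: a :: s)
  leibniz : ∀ x y : W, Jop (sh x y) = sh (Jop x) y + sh x (Jop y)
  graded : ∀ s t l : List ℤ, l.length ≠ s.length + t.length → sh (wd s) (wd t) l = 0

/-- The operator `J_{≥1}`. -/
def J1 : W →ₗ[ℚ] W :=
  Finsupp.lsum ℚ fun l => match l with
    | [] => (0 : ℚ →ₗ[ℚ] W)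
    | a :: s => if a = 1 then 0 else Finsupp.lsingle ((a - 1) :: s)

/-- The operator `δ_i`. -/
def del (i : ℕ) : W →ₗ[ℚ] W :=
  Finsupp.lsum ℚ fun l =>
    if i ≤ l.length then
      ∑ j ∈ Finset.range i, ((l.getD j 0 : ℤ) : ℚ) • Finsupp.lsingle (l.set j (l.getD j 0 + 1))
    else 0

def delZ (i : ℤ) : W →ₗ[ℚ] W := if 0 < i then del i.toNat else 0

/-- The shifted tensor `A ⊗̂ δ_i`. -/
def shiftT (A : W →ₗ[ℚ] W) (i : ℕ) : W ⊗[ℚ] W →ₗ[ℚ] W ⊗[ℚ] W :=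
  TensorProduct.lift <| Finsupp.lsum ℚ fun s =>
    LinearMap.toSpanSingleton ℚ (W →ₗ[ℚ] W ⊗[ℚ] W)
      ((TensorProduct.mk ℚ W W (A (wd s))) ∘ₗ delZ ((i : ℤ) - s.length))

/-- The counit. -/
def eps : W →ₗ[ℚ] ℚ :=
  Finsupp.lsum ℚ fun l => if l = [] then LinearMap.id else 0

/-- The grading degree `n - (s₁+⋯+s_n)` on words with nonpositive entries. -/
def gdeg (l : List ℤ) : ℤ := l.length - l.sum

/-- The componentwise product on `W ⊗ W`. -/
def shT (sh : W →ₗ[ℚ] W →ₗ[ℚ] W) : W ⊗[ℚ] W →ₗ[ℚ] W ⊗[ℚ] W →ₗ[ℚ] W ⊗[ℚ] W :=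
  TensorProduct.lift (LinearMap.compl₂ ((TensorProduct.mapBilinear (RingHom.id ℚ) W W W W).comp sh) sh)

/-- Characterization of the coproduct `Δ_{≤0}`. -/
structure IsDle0 (sh : W →ₗ[ℚ] W →ₗ[ℚ] W) (D : W →ₗ[ℚ] W ⊗[ℚ] W) : Prop where
  one : D (wd []) = wd [] ⊗ₜ[ℚ] wd []
  zero : D (wd [0]) = wd [] ⊗ₜ[ℚ] wd [0] + wd [0] ⊗ₜ[ℚ] wd []
  coder : ∀ l : List ℤ, NP l → D (Jop (wd l)) =
      ((TensorProduct.map LinearMap.id Jop + TensorProduct.map Jop LinearMap.id :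
        W ⊗[ℚ] W →ₗ[ℚ] W ⊗[ℚ] W)) (D (wd l))
  zeroCons : ∀ l : List ℤ, NP l → D (wd (0 :: l)) = shT sh (D (wd [0])) (D (wd l))

/-- The pairing realizing the Riemann duality map `φ`:
`phiPair x y = (φ x)(y)`, with `φ([s₁,…,s_k]) = [1-s₁,…,1-s_k]*`. -/
def phiPair : W →ₗ[ℚ] W →ₗ[ℚ] ℚ :=
  Finsupp.lsum ℚ fun l =>
    LinearMap.toSpanSingleton ℚ (W →ₗ[ℚ] ℚ) (Finsupp.lapply (l.map fun a => 1 - a))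

/-- `pairT f g` evaluates a tensor against a pair of linear functionals. -/
def pairT (f g : W →ₗ[ℚ] ℚ) : W ⊗[ℚ] W →ₗ[ℚ] ℚ :=
  TensorProduct.lift ((LinearMap.mul ℚ ℚ).compl₁₂ f g)

/-- The transpose of the dual operator `δ̃_m` (with `δ̃_m = 0` for `m ≤ 0`). -/
def tT (m : ℤ) : W →ₗ[ℚ] W :=
  Finsupp.lsum ℚ fun l =>
    if 0 < m ∧ m ≤ (l.length : ℤ) then
      ∑ j ∈ Finset.range m.toNat,
        ((-(l.getD j 0) : ℤ) : ℚ) • Finsupp.lsingle (l.set j (l.getD j 0 + 1))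
    else 0


/-! ### Auxiliary lemmas -/

noncomputable instance : Zero (W ⊗[ℚ] W) :=
  @AddMonoid.toZero _ (TensorProduct.addCommMonoid).toAddMonoid

lemma J1_wd_nil : J1 (wd []) = 0 := by
  simp [J1, wd, Finsupp.lsum_single]

lemma J1_wd_cons (a : ℤ) (s : List ℤ) :
    J1 (wd (a :: s)) = if a = 1 then 0 else wd ((a - 1) :: s) := by
  simp only [J1, wd, Finsupp.lsum_single]
  split <;> simp [Finsupp.lsingle, wd]

lemma del_wd (i : ℕ) (l : List ℤ) :
    del i (wd l) = if i ≤ l.length then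
      ∑ j ∈ Finset.range i, ((l.getD j 0 : ℤ) : ℚ) • wd (l.set j (l.getD j 0 + 1)) else 0 := by
  simp only [del, wd, Finsupp.lsum_single]
  split
  · simp [Finsupp.lsingle, wd]
  · rfl

lemma shiftT_wd (A : W →ₗ[ℚ] W) (i : ℕ) (s : List ℤ) (y : W) :
    shiftT A i (wd s ⊗ₜ[ℚ] y) = A (wd s) ⊗ₜ[ℚ] delZ ((i : ℤ) - s.length) y := by
  simp [shiftT, wd, Finsupp.lsum_single, TensorProduct.lift.tmul]

lemma del_wd_nil (i : ℕ) : del i (wd []) = 0 := by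
  rw [del_wd]
  split
  · rename_i h
    have : i = 0 := by simpa using h
    subst this; simp
  · rfl

lemma del_zero : del 0 = 0 := by
  apply Finsupp.lhom_ext
  intro a b
  simp [del, Finsupp.lsum_single]

lemma J1_del_comm (i : ℕ) (l : List ℤ) (hl : Pos l) :
    J1 (del i (wd l)) = del i (J1 (wd l)) +
      (if 1 ≤ i ∧ i ≤ l.length then wd l else 0) := by
  cases l with
  | nil =>
      rw [del_wd_nil, J1_wd_nil, map_zero, map_zero]
      have hni : ¬(1 ≤ i ∧ i ≤ ([] : List ℤ).length) := by
        simp only [List.length_nil]; omega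
      rw [if_neg hni, add_zero]
  | cons a s =>
      have ha : (1:ℤ) ≤ a := hl a (by simp)
      by_cases hi : i ≤ (a :: s).length
      · rcases Nat.eq_zero_or_pos i with h0 | h1
        · subst h0
          rw [del_zero]
          simp
        · obtain ⟨m, rfl⟩ : ∃ m, i = m + 1 := ⟨i - 1, by omega⟩
          have hL : J1 (del (m+1) (wd (a :: s))) =
              (∑ j ∈ Finset.range m, ((s.getD j 0 : ℤ):ℚ) •
                (if a = 1 then 0 else wd ((a-1) :: s.set j (s.getD j 0 + 1))))
              + (a:ℚ) • wd (a :: s) := by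
            rw [del_wd, if_pos hi, map_sum, Finset.sum_range_succ']
            congr 1
            · apply Finset.sum_congr rfl
              intro j _
              rw [map_smul]
              simp only [List.getD_cons_succ, List.set_cons_succ]
              rw [J1_wd_cons]
            · rw [map_smul]
              simp only [List.getD_cons_zero, List.set_cons_zero]
              rw [J1_wd_cons, if_neg (by omega)]
              simp
          by_cases h1a : a = 1
          · subst h1a
            rw [hL, J1_wd_cons]
            simp only [if_pos rfl, reduceIte]
            rw [if_pos ⟨by omega, hi⟩]
            simp
          · rw [hL, J1_wd_cons, if_neg h1a, del_wd,
                if_pos (by simpa using hi), if_pos ⟨by omega, hi⟩,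
                Finset.sum_range_succ']
            simp only [List.getD_cons_zero, List.getD_cons_succ,
              List.set_cons_zero, List.set_cons_succ, if_neg h1a]
            have h2 : a - 1 + 1 = a := by ring
            rw [h2]
            push_cast
            module
      · have hni : ¬(1 ≤ i ∧ i ≤ (a :: s).length) := by
          simp only [List.length_cons] at hi ⊢; omega
        rw [del_wd, if_neg hi, map_zero, J1_wd_cons, if_neg hni]
        split
        · simp
        · rw [del_wd, if_neg (by simpa using hi)]
          simp

lemma J1_delZ_comm (m : ℤ) (l : List ℤ) (hl : Pos l) :
    J1 (delZ m (wd l)) = delZ m (J1 (wd l)) +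
      (if 1 ≤ m ∧ m ≤ (l.length : ℤ) then wd l else 0) := by
  by_cases hm : 0 < m
  · simp only [delZ, if_pos hm]
    rw [J1_del_comm _ _ hl]
    congr 1
    split_ifs with h1 h2 <;> first | rfl | omega
  · simp only [delZ, if_neg hm]
    rw [if_neg (by omega)]
    simp

def Kop : W ⊗[ℚ] W →ₗ[ℚ] W ⊗[ℚ] W :=
  TensorProduct.map LinearMap.id J1 + TensorProduct.map J1 LinearMap.id

def Mop (i : ℕ) : W ⊗[ℚ] W →ₗ[ℚ] W ⊗[ℚ] W :=
  shiftT LinearMap.id i + TensorProduct.map (del i) LinearMap.id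

lemma Kop_tmul (x y : W) : Kop (x ⊗ₜ[ℚ] y) = x ⊗ₜ[ℚ] J1 y + J1 x ⊗ₜ[ℚ] y := by
  simp [Kop, TensorProduct.map_tmul]

lemma Mop_tmul (i : ℕ) (u : List ℤ) (y : W) :
    Mop i (wd u ⊗ₜ[ℚ] y) = wd u ⊗ₜ[ℚ] delZ ((i:ℤ) - u.length) y + del i (wd u) ⊗ₜ[ℚ] y := by
  simp [Mop, shiftT_wd, TensorProduct.map_tmul]

lemma J1_wd_cases (u : List ℤ) :
    J1 (wd u) = 0 ∨ ∃ u', u'.length = u.length ∧ J1 (wd u) = wd u' := by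
  cases u with
  | nil => left; exact J1_wd_nil
  | cons a s =>
      rw [J1_wd_cons]
      by_cases h : a = 1
      · left; simp [h]
      · right; exact ⟨(a-1)::s, by simp, by simp [h]⟩

lemma Mop_tmul_J1 (i : ℕ) (u : List ℤ) (y : W) :
    Mop i (J1 (wd u) ⊗ₜ[ℚ] y)
      = J1 (wd u) ⊗ₜ[ℚ] delZ ((i:ℤ) - u.length) y + del i (J1 (wd u)) ⊗ₜ[ℚ] y := by
  rcases J1_wd_cases u with h | ⟨u', hlen, h⟩
  · rw [h]
    simp [TensorProduct.zero_tmul]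
  · rw [h, Mop_tmul, hlen]

lemma comm_tmul (i : ℕ) (u v : List ℤ) (hu : Pos u) (hv : Pos v) :
    Kop (Mop i (wd u ⊗ₜ[ℚ] wd v)) = Mop i (Kop (wd u ⊗ₜ[ℚ] wd v)) +
      (if 1 ≤ i ∧ i ≤ u.length + v.length then wd u ⊗ₜ[ℚ] wd v else 0) := by
  have hind : (wd u ⊗ₜ[ℚ] (if 1 ≤ (i:ℤ) - u.length ∧ (i:ℤ) - u.length ≤ (v.length:ℤ)
        then wd v else 0))
      + ((if 1 ≤ i ∧ i ≤ u.length then wd u else 0) ⊗ₜ[ℚ] wd v)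
      = (if 1 ≤ i ∧ i ≤ u.length + v.length then wd u ⊗ₜ[ℚ] wd v else 0) := by
    split_ifs <;>
      first
        | (exfalso; omega)
        | simp [TensorProduct.zero_tmul, TensorProduct.tmul_zero]
        | omega
  rw [Mop_tmul, Kop_tmul, map_add, Kop_tmul, Kop_tmul,
      J1_delZ_comm _ _ hv, J1_del_comm _ _ hu,
      map_add, Mop_tmul, Mop_tmul_J1,
      TensorProduct.tmul_add, TensorProduct.add_tmul, ← hind]
  abel

lemma shiftT_zero_apply (A : W →ₗ[ℚ] W) (x : W ⊗[ℚ] W) : shiftT A 0 x = 0 := by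
  induction x using TensorProduct.induction_on with
  | zero => simp
  | add a b ha hb => rw [map_add, ha, hb, add_zero]
  | tmul x y =>
      induction x using Finsupp.induction_linear with
      | zero => rw [TensorProduct.zero_tmul, map_zero]
      | add f g hf hg => rw [TensorProduct.add_tmul, map_add, hf, hg, add_zero]
      | single a b =>
          have hs : (Finsupp.single a b : W) = b • wd a := by
            simp [wd, Finsupp.smul_single]
          rw [hs, ← TensorProduct.smul_tmul', map_smul, shiftT_wd]
          have hz : delZ (((0:ℕ):ℤ) - a.length) = 0 := by
            unfold delZ
            rw [if_neg (by omega)]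
          rw [hz]
          simp

lemma Mop_zero_apply (x : W ⊗[ℚ] W) : Mop 0 x = 0 := by
  induction x using TensorProduct.induction_on with
  | zero => simp
  | add a b ha hb => rw [map_add, ha, hb, add_zero]
  | tmul x y =>
      show shiftT LinearMap.id 0 (x ⊗ₜ[ℚ] y)
          + TensorProduct.map (del 0) LinearMap.id (x ⊗ₜ[ℚ] y) = 0
      rw [shiftT_zero_apply, TensorProduct.map_tmul, del_zero]
      simp

def Spos (k : ℕ) : Submodule ℚ W :=
  Submodule.span ℚ {x | ∃ u : List ℤ, Pos u ∧ u.length = k ∧ x = wd u}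

def Tpos (k : ℕ) : Submodule ℚ (W ⊗[ℚ] W) :=
  Submodule.span ℚ
    {x | ∃ u v : List ℤ, Pos u ∧ Pos v ∧ u.length + v.length = k ∧ x = wd u ⊗ₜ[ℚ] wd v}

lemma wd_mem_Spos {u : List ℤ} (hu : Pos u) : wd u ∈ Spos u.length :=
  Submodule.subset_span ⟨u, hu, rfl, rfl⟩

lemma del_mem {i k : ℕ} {x : W} (hx : x ∈ Spos k) : del i x ∈ Spos k := by
  induction hx using Submodule.span_induction with
  | mem x hx =>
      obtain ⟨u, hu, rfl, rfl⟩ := hx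
      rw [del_wd]
      split
      · rename_i hle
        apply Submodule.sum_mem
        intro j hj
        have hjlt : j < u.length := lt_of_lt_of_le (Finset.mem_range.mp hj) hle
        apply Submodule.smul_mem
        apply Submodule.subset_span
        refine ⟨u.set j (u.getD j 0 + 1), ?_, by simp, rfl⟩
        intro a haa
        rcases List.mem_or_eq_of_mem_set haa with h | h
        · exact hu a h
        · subst h
          have : u.getD j 0 ∈ u := by
            rw [List.getD_eq_getElem _ _ hjlt]
            exact List.getElem_mem _
          have := hu _ this
          omega
      · exact Submodule.zero_mem _
  | zero => rw [map_zero]; exact Submodule.zero_mem _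
  | add _ _ _ _ h1 h2 => rw [map_add]; exact Submodule.add_mem _ h1 h2
  | smul c _ _ h => rw [map_smul]; exact Submodule.smul_mem _ _ h

lemma delZ_mem {m : ℤ} {k : ℕ} {x : W} (hx : x ∈ Spos k) : delZ m x ∈ Spos k := by
  unfold delZ
  split
  · exact del_mem hx
  · exact Submodule.zero_mem _

lemma tmul_mem_Tpos_left {u : List ℤ} (hu : Pos u) {b : ℕ} {y : W} (hy : y ∈ Spos b) :
    wd u ⊗ₜ[ℚ] y ∈ Tpos (u.length + b) := by
  induction hy using Submodule.span_induction with
  | mem y hy =>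
      obtain ⟨v, hv, hlen, rfl⟩ := hy
      exact Submodule.subset_span ⟨u, v, hu, hv, by omega, rfl⟩
  | zero => rw [TensorProduct.tmul_zero]; exact Submodule.zero_mem _
  | add _ _ _ _ h1 h2 => rw [TensorProduct.tmul_add]; exact Submodule.add_mem _ h1 h2
  | smul c _ _ h => rw [TensorProduct.tmul_smul]; exact Submodule.smul_mem _ _ h

lemma tmul_mem_Tpos_right {v : List ℤ} (hv : Pos v) {a : ℕ} {x : W} (hx : x ∈ Spos a) :
    x ⊗ₜ[ℚ] wd v ∈ Tpos (a + v.length) := by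
  induction hx using Submodule.span_induction with
  | mem y hy =>
      obtain ⟨u, hu, hlen, rfl⟩ := hy
      exact Submodule.subset_span ⟨u, v, hu, hv, by omega, rfl⟩
  | zero => rw [TensorProduct.zero_tmul]; exact Submodule.zero_mem _
  | add _ _ _ _ h1 h2 => rw [TensorProduct.add_tmul]; exact Submodule.add_mem _ h1 h2
  | smul c _ _ h => rw [← TensorProduct.smul_tmul']; exact Submodule.smul_mem _ _ h

lemma Mop_mem {i k : ℕ} {x : W ⊗[ℚ] W} (hx : x ∈ Tpos k) : Mop i x ∈ Tpos k := by
  induction hx using Submodule.span_induction with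
  | mem x hx =>
      obtain ⟨u, v, hu, hv, hk, rfl⟩ := hx
      rw [Mop_tmul]
      apply Submodule.add_mem
      · have h1 : wd v ∈ Spos v.length := wd_mem_Spos hv
        have := tmul_mem_Tpos_left hu (delZ_mem (m := (i:ℤ) - u.length) h1)
        rwa [hk] at this
      · have h1 : wd u ∈ Spos u.length := wd_mem_Spos hu
        have := tmul_mem_Tpos_right hv (del_mem (i := i) h1)
        rwa [hk] at this
  | zero => rw [map_zero]; exact Submodule.zero_mem _
  | add _ _ _ _ h1 h2 => rw [map_add]; exact Submodule.add_mem _ h1 h2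
  | smul c _ _ h => rw [map_smul]; exact Submodule.smul_mem _ _ h

lemma Kop_Mop_comm {i k : ℕ} (h1 : 1 ≤ i) (h2 : i ≤ k) {x : W ⊗[ℚ] W} (hx : x ∈ Tpos k) :
    Kop (Mop i x) = Mop i (Kop x) + x := by
  induction hx using Submodule.span_induction with
  | mem x hx =>
      obtain ⟨u, v, hu, hv, hk, rfl⟩ := hx
      rw [comm_tmul i u v hu hv, if_pos ⟨h1, by omega⟩]
  | zero => simp
  | add x y hx hy ihx ihy =>
      rw [map_add, map_add, ihx, ihy, map_add, map_add]
      abel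
  | smul c x hx ih =>
      rw [map_smul, map_smul, ih, map_smul, map_smul, smul_add]

lemma J1_replicate (k : ℕ) : J1 (wd (List.replicate k (1:ℤ))) = 0 := by
  cases k with
  | zero => exact J1_wd_nil
  | succ m => rw [List.replicate_succ, J1_wd_cons]; simp

lemma Pos_replicate (k : ℕ) : Pos (List.replicate k (1:ℤ)) := fun a ha => by
  rw [List.eq_of_mem_replicate ha]

lemma sum_ge_length (l : List ℤ) (hl : Pos l) : (l.length : ℤ) ≤ l.sum := by
  induction l with
  | nil => simp
  | cons a s ih =>
      have h1 := ih (fun x hx => hl x (List.mem_cons_of_mem _ hx))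
      have ha := hl a (List.mem_cons_self)
      rw [List.sum_cons, List.length_cons]
      push_cast
      omega

lemma eq_replicate_of (l : List ℤ) (hl : Pos l) (h : l.sum ≤ (l.length:ℤ)) :
    l = List.replicate l.length 1 := by
  induction l with
  | nil => rfl
  | cons a s ih =>
      have hpos : Pos s := fun x hx => hl x (List.mem_cons_of_mem _ hx)
      have hs := sum_ge_length s hpos
      have ha := hl a (List.mem_cons_self)
      rw [List.sum_cons, List.length_cons] at h
      push_cast at h
      have ha1 : a = 1 := by omega
      have hrec : s = List.replicate s.length 1 := ih hpos (by omega)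
      rw [List.length_cons, List.replicate_succ, ha1, ← hrec]

lemma sum_le_length (l : List ℤ) (h : ∀ a ∈ l, a ≤ 1) : l.sum ≤ (l.length : ℤ) := by
  induction l with
  | nil => simp
  | cons a s ih =>
      have h1 := ih (fun x hx => h x (List.mem_cons_of_mem _ hx))
      have ha := h a (List.mem_cons_self)
      rw [List.sum_cons, List.length_cons]
      push_cast
      omega

lemma exists_getD_two (l : List ℤ) (hl : Pos l) (h : (l.length:ℤ) < l.sum) :
    ∃ j, j < l.length ∧ 2 ≤ l.getD j 0 := by
  by_contra hc
  push_neg at hc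
  have hle : l.sum ≤ (l.length:ℤ) := by
    apply sum_le_length
    intro a ha
    obtain ⟨i, hi, rfl⟩ := List.mem_iff_getElem.mp ha
    have h2 := hc i hi
    rw [List.getD_eq_getElem _ _ hi] at h2
    omega
  omega

lemma getD_set_self (l : List ℤ) (j : ℕ) (h : j < l.length) (x : ℤ) :
    (l.set j x).getD j 0 = x := by
  rw [List.getD_eq_getElem _ _ (by simpa using h), List.getElem_set_self]

lemma set_getD_self (l : List ℤ) (j : ℕ) (h : j < l.length) :
    l.set j (l.getD j 0) = l := by
  apply List.ext_getElem (by simp)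
  intro n h1 h2
  rw [List.getElem_set]
  split
  · rename_i he; subst he; rw [List.getD_eq_getElem _ _ h]
  · rfl

lemma sum_set_lt (l : List ℤ) (j : ℕ) (h : j < l.length) (x : ℤ) :
    (l.set j x).sum = l.sum - l.getD j 0 + x := by
  rw [List.sum_set, if_pos h]
  have h2 : l.drop j = l[j] :: l.drop (j+1) := List.drop_eq_getElem_cons h
  have h3 := List.sum_take_add_sum_drop l j
  rw [h2, List.sum_cons] at h3
  rw [List.getD_eq_getElem _ _ h]
  omega

lemma del_diff (l : List ℤ) (j : ℕ) (hj : j < l.length) (hc2 : 2 ≤ l.getD j 0) :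
    del (j+1) (wd (l.set j (l.getD j 0 - 1))) - del j (wd (l.set j (l.getD j 0 - 1)))
      = ((l.getD j 0 - 1 : ℤ) : ℚ) • wd l := by
  have hlen : (l.set j (l.getD j 0 - 1)).length = l.length := by simp
  rw [del_wd, del_wd, if_pos (by omega), if_pos (by omega),
      Finset.sum_range_succ, add_sub_cancel_left]
  rw [getD_set_self l j hj]
  congr 2
  rw [List.set_set]
  have h2 : l.getD j 0 - 1 + 1 = l.getD j 0 := by ring
  rw [h2, set_getD_self l j hj]


/-- On the MZV shuffle Hopf algebra `H_{≥1}` with coproduct `Δ_{≥1}`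
(characterized by its values on `1`, on `[1_k]`, and the shifted coderivation property of the
`δ_i`), the operator `J_{≥1}` is a coderivation:
`(id ⊗ J_{≥1} + J_{≥1} ⊗ id) Δ_{≥1} = Δ_{≥1} J_{≥1}`. -/
theorem J1_coderivation
    (D : W →ₗ[ℚ] W ⊗[ℚ] W)
    (hD1 : D (wd []) = wd [] ⊗ₜ[ℚ] wd [])
    (hDk : ∀ k : ℕ, D (wd (List.replicate k (1 : ℤ)))
      = ∑ j ∈ Finset.range (k + 1),
          wd (List.replicate j (1 : ℤ)) ⊗ₜ[ℚ] wd (List.replicate (k - j) (1 : ℤ)))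
    (hDcod : ∀ i : ℕ, 1 ≤ i → ∀ l : List ℤ, Pos l →
      (shiftT LinearMap.id i + TensorProduct.map (del i) LinearMap.id :
        W ⊗[ℚ] W →ₗ[ℚ] W ⊗[ℚ] W) (D (wd l)) = D (del i (wd l)))
    (l : List ℤ) (hl : Pos l) :
    (TensorProduct.map LinearMap.id J1 + TensorProduct.map J1 LinearMap.id :
      W ⊗[ℚ] W →ₗ[ℚ] W ⊗[ℚ] W) (D (wd l)) = D (J1 (wd l)) := by
  classical
  have hM : ∀ (i : ℕ) (l : List ℤ), Pos l → Mop i (D (wd l)) = D (del i (wd l)) := by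
    intro i l hl
    rcases Nat.eq_zero_or_pos i with rfl | hi
    · rw [Mop_zero_apply, del_zero]
      simp
    · exact hDcod i hi l hl
  have hMJ : ∀ (i : ℕ) (l : List ℤ), Pos l → Mop i (D (J1 (wd l))) = D (del i (J1 (wd l))) := by
    intro i l hl
    cases l with
    | nil => rw [J1_wd_nil]; simp
    | cons a s =>
        rw [J1_wd_cons]
        by_cases h : a = 1
        · rw [if_pos h]; simp
        · rw [if_neg h]
          apply hM
          intro x hx
          rcases List.mem_cons.mp hx with rfl | hx
          · have := hl a (List.mem_cons_self); omega
          · exact hl x (List.mem_cons_of_mem _ hx)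
  suffices H : ∀ n : ℕ, ∀ l : List ℤ, Pos l → (l.sum - l.length).toNat = n →
      D (wd l) ∈ Tpos l.length ∧ Kop (D (wd l)) = D (J1 (wd l)) by
    exact (H _ l hl rfl).2
  intro n
  induction n with
  | zero =>
      intro l hl hn
      have hge := sum_ge_length l hl
      have hrep : l = List.replicate l.length 1 := eq_replicate_of l hl (by omega)
      constructor
      · rw [hrep, hDk]
        apply Submodule.sum_mem
        intro j hj
        apply Submodule.subset_span
        refine ⟨List.replicate j 1, List.replicate (l.length - j) 1,
          Pos_replicate j, Pos_replicate _, ?_, rfl⟩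
        have := Finset.mem_range.mp hj
        simp only [List.length_replicate] at this ⊢
        omega
      · rw [hrep, hDk, J1_replicate, map_zero, map_sum]
        apply Finset.sum_eq_zero
        intro j hj
        rw [Kop_tmul, J1_replicate, J1_replicate]
        simp
  | succ n IH =>
      intro l hl hn
      have hge := sum_ge_length l hl
      have hsum : (l.length:ℤ) < l.sum := by omega
      obtain ⟨j, hj, hc2⟩ := exists_getD_two l hl hsum
      have hpos' : Pos (l.set j (l.getD j 0 - 1)) := by
        intro a ha
        rcases List.mem_or_eq_of_mem_set ha with h | h
        · exact hl a h
        · omega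
      have hlen : (l.set j (l.getD j 0 - 1)).length = l.length := by simp
      have hmeas : ((l.set j (l.getD j 0 - 1)).sum - (l.set j (l.getD j 0 - 1)).length).toNat
          = n := by
        rw [sum_set_lt l j hj, hlen]
        omega
      obtain ⟨ihT, ihK⟩ := IH (l.set j (l.getD j 0 - 1)) hpos' hmeas
      rw [hlen] at ihT
      have hkey := del_diff l j hj hc2
      have hc0 : ((l.getD j 0 - 1 : ℤ):ℚ) ≠ 0 := by
        rw [Int.cast_ne_zero]
        omega
      set l' := l.set j (l.getD j 0 - 1) with hl'def
      set x' := D (wd l') with hx'def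
      have hDl : ((l.getD j 0 - 1 : ℤ):ℚ) • D (wd l) = Mop (j+1) x' - Mop j x' := by
        rw [← map_smul, ← hkey, map_sub, hx'def, hM (j+1) l' hpos', hM j l' hpos']
      constructor
      · have hmem : ((l.getD j 0 - 1 : ℤ):ℚ) • D (wd l) ∈ Tpos l.length := by
          rw [hDl]
          exact Submodule.sub_mem _ (Mop_mem ihT) (Mop_mem ihT)
        exact (Submodule.smul_mem_iff _ hc0).mp hmem
      · have heq : ((l.getD j 0 - 1 : ℤ):ℚ) • Kop (D (wd l))
            = ((l.getD j 0 - 1 : ℤ):ℚ) • D (J1 (wd l)) := by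
         have hL : ((l.getD j 0 - 1 : ℤ):ℚ) • Kop (D (wd l))
            = Kop (Mop (j+1) x') - Kop (Mop j x') := by
           rw [← map_smul, hDl, map_sub]
         have hR : ((l.getD j 0 - 1 : ℤ):ℚ) • D (J1 (wd l))
            = (Mop (j+1) (Kop x') + x') - (Mop j (Kop x') + (if 1 ≤ j then x' else 0)) := by
           rw [← map_smul, ← map_smul, ← hkey, map_sub, map_sub,
              J1_del_comm (j+1) l' hpos', J1_del_comm j l' hpos',
              if_pos ⟨by omega, by rw [hlen]; omega⟩]
           have hif : (if 1 ≤ j ∧ j ≤ l'.length then wd l' else 0)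
              = (if 1 ≤ j then wd l' else 0) := by
             split_ifs with h1 h2 <;> first | rfl | (exfalso; rw [hlen] at h1; omega)
           rw [hif, map_add, map_add, apply_ite D, map_zero,
              ← hMJ (j+1) l' hpos', ← hMJ j l' hpos', ihK, ← hx'def]
         rw [hL, hR, Kop_Mop_comm (by omega) (by rw [← hlen] at hj; omega) ihT]
         rcases Nat.eq_zero_or_pos j with rfl | hj1
         · rw [Mop_zero_apply, Mop_zero_apply, map_zero, if_neg (by omega)]
           abel
         · have h1j : 1 ≤ j := hj1
           rw [Kop_Mop_comm h1j (by omega) ihT, if_pos h1j]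
        calc Kop (D (wd l))
            = ((l.getD j 0 - 1 : ℤ):ℚ)⁻¹ • (((l.getD j 0 - 1 : ℤ):ℚ) • Kop (D (wd l))) :=
              (inv_smul_smul₀ hc0 _).symm
          _ = ((l.getD j 0 - 1 : ℤ):ℚ)⁻¹ • (((l.getD j 0 - 1 : ℤ):ℚ) • D (J1 (wd l))) := by
              rw [heq]
          _ = D (J1 (wd l)) := inv_smul_smul₀ hc0 _

end
end

section
/- The coproduct Δ_{≤0} on H_{≤0}, uniquely determined by Δ_{≤0}(1)=1⊗1, Δ_{≤0}([0])=1⊗[0]+[0]⊗1, Δ_{≤0}J_{≤0} = (id⊗J_{≤0}+J_{≤0}⊗id)Δ_{≤0}, and Δ_{≤0}([0,s]) = Δ_{≤0}([0]) ⧢_{≤0} Δ_{≤0}([s]), is coassociative and cocommutative. -/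
open Finsupp TensorProduct

noncomputable section

namespace Dle0Aux

-- Work around stuck typeclass searches for `Zero` on tensor products of `Finsupp`s.
instance : Zero (W ⊗[ℚ] W) := AddMonoid.toZero
instance : Zero (W ⊗[ℚ] (W ⊗[ℚ] W)) := AddMonoid.toZero
instance : Zero ((W ⊗[ℚ] W) ⊗[ℚ] W) := AddMonoid.toZero

lemma NP_nil : NP ([] : List ℤ) := by intro a h; simp at h

lemma NP_sum : ∀ l : List ℤ, NP l → l.sum ≤ 0 := by
  intro l
  induction l with
  | nil => intro _; simp
  | cons a s ih =>
    intro h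
    have ha : a ≤ 0 := h a (List.mem_cons_self)
    have hs : s.sum ≤ 0 := ih (fun x hx => h x (List.mem_cons_of_mem _ hx))
    simp only [List.sum_cons]; omega

lemma pre_wd (a : ℤ) (l : List ℤ) : pre a (wd l) = wd (a :: l) := by
  simp [pre, wd, Finsupp.mapDomain_single]

lemma Jop_wd (c : ℤ) (s : List ℤ) : Jop (wd (c :: s)) = wd ((c - 1) :: s) := by
  simp [Jop, wd]

lemma Jop_nil : Jop (wd []) = 0 := by
  simp [Jop, wd]

/-- Span of tensors of nonpositive words. -/
def Tspan : Submodule ℚ (W ⊗[ℚ] W) :=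
  Submodule.span ℚ {x | ∃ a b, NP a ∧ NP b ∧ x = wd a ⊗ₜ[ℚ] wd b}

/-- The invariant for the main induction. -/
def InvD (D : W →ₗ[ℚ] W ⊗[ℚ] W) (x : W) : Prop :=
  D x ∈ Tspan ∧ (TensorProduct.comm ℚ W W) (D x) = D x ∧
    (TensorProduct.map LinearMap.id D) (D x)
      = (TensorProduct.assoc ℚ W W W) ((TensorProduct.map D LinearMap.id) (D x))

lemma comm_map (f g : W →ₗ[ℚ] W) (t : W ⊗[ℚ] W) :
    (TensorProduct.comm ℚ W W) (TensorProduct.map f g t)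
      = TensorProduct.map g f ((TensorProduct.comm ℚ W W) t) := by
  induction t using TensorProduct.induction_on with
  | zero => simp [LinearEquiv.map_zero]
  | tmul x y => simp
  | add x y hx hy => simp [map_add, LinearEquiv.map_add, hx, hy]

lemma shT_tmul (sh : W →ₗ[ℚ] W →ₗ[ℚ] W) (a b c d : W) :
    shT sh (a ⊗ₜ[ℚ] b) (c ⊗ₜ[ℚ] d) = (sh a c) ⊗ₜ[ℚ] (sh b d) := by
  simp [shT]

lemma sh_zero_apply (sh : W →ₗ[ℚ] W →ₗ[ℚ] W) (hsh : IsExtShuffle sh) (y : W) :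
    sh (wd [0]) y = pre 0 y := by
  have h : sh (wd [0]) = pre 0 := Finsupp.lhom_ext fun a b => by
    have hb : (Finsupp.single a b : W) = b • wd a := by
      simp [wd, Finsupp.smul_single]
    rw [hb, map_smul, map_smul, hsh.zero_mul_word, pre_wd]
  rw [h]

lemma shT_D0 (sh : W →ₗ[ℚ] W →ₗ[ℚ] W) (hsh : IsExtShuffle sh)
    (D : W →ₗ[ℚ] W ⊗[ℚ] W) (hD : IsDle0 sh D) (t : W ⊗[ℚ] W) :
    shT sh (D (wd [0])) t
      = ((TensorProduct.map LinearMap.id (pre 0)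
          + TensorProduct.map (pre 0) LinearMap.id :
            W ⊗[ℚ] W →ₗ[ℚ] W ⊗[ℚ] W)) t := by
  rw [hD.zero, map_add]
  induction t using TensorProduct.induction_on with
  | zero => simp
  | tmul x y =>
    simp only [LinearMap.add_apply, shT_tmul, TensorProduct.map_tmul,
      hsh.one_mul, sh_zero_apply sh hsh, LinearMap.id_coe, id_eq]
  | add x y hx hy =>
    simp only [map_add, LinearMap.add_apply] at hx hy ⊢
    rw [hx, hy]

lemma coder_pre (sh : W →ₗ[ℚ] W →ₗ[ℚ] W) (hsh : IsExtShuffle sh)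
    (D : W →ₗ[ℚ] W ⊗[ℚ] W) (hD : IsDle0 sh D) (b : List ℤ) (hb : NP b) :
    D (pre 0 (wd b))
      = ((TensorProduct.map LinearMap.id (pre 0)
          + TensorProduct.map (pre 0) LinearMap.id :
            W ⊗[ℚ] W →ₗ[ℚ] W ⊗[ℚ] W)) (D (wd b)) := by
  rw [pre_wd, hD.zeroCons b hb, shT_D0 sh hsh D hD]

lemma base (sh : W →ₗ[ℚ] W →ₗ[ℚ] W) (D : W →ₗ[ℚ] W ⊗[ℚ] W) (hD : IsDle0 sh D) :
    InvD D (wd []) := by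
  refine ⟨?_, ?_, ?_⟩
  · rw [hD.one]
    exact Submodule.subset_span ⟨[], [], NP_nil, NP_nil, rfl⟩
  · rw [hD.one, TensorProduct.comm_tmul]
  · rw [hD.one]
    simp only [TensorProduct.map_tmul, LinearMap.id_coe, id_eq, hD.one,
      TensorProduct.assoc_tmul]

lemma step (D : W →ₗ[ℚ] W ⊗[ℚ] W) (A : W →ₗ[ℚ] W)
    (hA : ∀ b : List ℤ, NP b → D (A (wd b))
        = ((TensorProduct.map LinearMap.id A + TensorProduct.map A LinearMap.id :
            W ⊗[ℚ] W →ₗ[ℚ] W ⊗[ℚ] W)) (D (wd b)))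
    (hA' : ∀ b : List ℤ, NP b → A (wd b) = 0 ∨ ∃ b', NP b' ∧ A (wd b) = wd b')
    (l : List ℤ) (hl : NP l) (ih : InvD D (wd l)) : InvD D (A (wd l)) := by
  obtain ⟨hmem, hcomm, hco⟩ := ih
  set M : W ⊗[ℚ] W →ₗ[ℚ] W ⊗[ℚ] W :=
    TensorProduct.map LinearMap.id A + TensorProduct.map A LinearMap.id with hM
  have hDA : D (A (wd l)) = M (D (wd l)) := hA l hl
  have hMt : ∀ a b : List ℤ, M (wd a ⊗ₜ[ℚ] wd b)
      = wd a ⊗ₜ[ℚ] A (wd b) + A (wd a) ⊗ₜ[ℚ] wd b := by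
    intro a b
    simp [hM]
  -- M preserves Tspan
  have memM : ∀ t ∈ Tspan, M t ∈ Tspan := by
    intro t ht
    refine Submodule.span_induction ?_ ?_ ?_ ?_ ht
    · rintro x ⟨a, b, ha, hb, rfl⟩
      rw [hMt a b]
      refine Submodule.add_mem _ ?_ ?_
      · rcases hA' b hb with h0 | ⟨b', hb', hbe⟩
        · rw [h0, TensorProduct.tmul_zero]; exact Submodule.zero_mem _
        · rw [hbe]; exact Submodule.subset_span ⟨a, b', ha, hb', rfl⟩
      · rcases hA' a ha with h0 | ⟨a', ha', hae⟩
        · rw [h0, TensorProduct.zero_tmul]; exact Submodule.zero_mem _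
        · rw [hae]; exact Submodule.subset_span ⟨a', b, ha', hb, rfl⟩
    · rw [map_zero]; exact Submodule.zero_mem _
    · intro x y _ _ hx hy; rw [map_add]; exact Submodule.add_mem _ hx hy
    · intro c x _ hx; rw [map_smul]; exact Submodule.smul_mem _ _ hx
  -- comm commutes with M
  have hcM : ∀ t : W ⊗[ℚ] W,
      (TensorProduct.comm ℚ W W) (M t) = M ((TensorProduct.comm ℚ W W) t) := by
    intro t
    simp only [hM, LinearMap.add_apply, LinearEquiv.map_add, comm_map]
    abel
  -- the triple operator
  set E : W ⊗[ℚ] (W ⊗[ℚ] W) →ₗ[ℚ] W ⊗[ℚ] (W ⊗[ℚ] W) :=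
    TensorProduct.map LinearMap.id M
      + TensorProduct.map A (LinearMap.id : W ⊗[ℚ] W →ₗ[ℚ] W ⊗[ℚ] W) with hE
  have lemL : ∀ t ∈ Tspan,
      (TensorProduct.map LinearMap.id D) (M t)
        = E ((TensorProduct.map LinearMap.id D) t) := by
    intro t ht
    refine Submodule.span_induction ?_ ?_ ?_ ?_ ht
    · rintro x ⟨a, b, ha, hb, rfl⟩
      rw [hMt a b, map_add]
      simp only [TensorProduct.map_tmul, LinearMap.id_coe, id_eq]
      rw [hA b hb]
      simp only [hE, LinearMap.add_apply, TensorProduct.map_tmul,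
        LinearMap.id_coe, id_eq, ← hM]
    · simp
    · intro x y _ _ hx hy
      simp only [map_add] at hx hy ⊢
      rw [hx, hy]
    · intro c x _ hx
      simp only [map_smul] at hx ⊢
      rw [hx]
  have lemR : ∀ t ∈ Tspan,
      (TensorProduct.assoc ℚ W W W) ((TensorProduct.map D LinearMap.id) (M t))
        = E ((TensorProduct.assoc ℚ W W W) ((TensorProduct.map D LinearMap.id) t)) := by
    intro t ht
    refine Submodule.span_induction ?_ ?_ ?_ ?_ ht
    · rintro x ⟨a, b, ha, hb, rfl⟩
      rw [hMt a b, map_add, LinearEquiv.map_add]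
      simp only [TensorProduct.map_tmul, LinearMap.id_coe, id_eq]
      rw [hA a ha]
      try simp only [← hM]
      generalize D (wd a) = u
      induction u using TensorProduct.induction_on with
      | zero =>
        simp only [TensorProduct.zero_tmul, LinearMap.map_zero, LinearEquiv.map_zero, add_zero]
      | tmul p q =>
        simp only [hM, hE, LinearMap.add_apply, TensorProduct.map_tmul,
          LinearMap.id_coe, id_eq, TensorProduct.add_tmul, TensorProduct.tmul_add,
          TensorProduct.assoc_tmul, LinearEquiv.map_add]
        abel
      | add u v hu hv =>
        simp only [LinearMap.map_add, TensorProduct.add_tmul, LinearEquiv.map_add]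
        rw [← hu, ← hv]
        abel
    · simp only [LinearMap.map_zero, LinearEquiv.map_zero]
    · intro x y _ _ hx hy
      simp only [LinearMap.map_add, LinearEquiv.map_add] at hx hy ⊢
      rw [hx, hy]
    · intro c x _ hx
      simp only [LinearMap.map_smul, LinearEquiv.map_smul] at hx ⊢
      rw [hx]
  refine ⟨?_, ?_, ?_⟩
  · rw [hDA]; exact memM _ hmem
  · rw [hDA, hcM, hcomm]
  · rw [hDA, lemL _ hmem, hco, lemR _ hmem]

end Dle0Aux


/-- The coproduct `Δ_{≤0}` is coassociative and cocommutative on `H_{≤0}`. -/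
theorem Dle0_coassoc_cocomm
    (sh : W →ₗ[ℚ] W →ₗ[ℚ] W) (hsh : IsExtShuffle sh)
    (D : W →ₗ[ℚ] W ⊗[ℚ] W) (hD : IsDle0 sh D) (l : List ℤ) (hl : NP l) :
    (TensorProduct.map LinearMap.id D) (D (wd l))
        = (TensorProduct.assoc ℚ W W W) ((TensorProduct.map D LinearMap.id) (D (wd l)))
    ∧ (TensorProduct.comm ℚ W W) (D (wd l)) = D (wd l) := by
  classical
  have key : ∀ n : ℕ, ∀ l : List ℤ, NP l → (l.length : ℤ) - l.sum ≤ n → Dle0Aux.InvD D (wd l) := by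
    intro n
    induction n with
    | zero =>
      intro l hl hb
      have hs := Dle0Aux.NP_sum l hl
      have hlen : l.length = 0 := by omega
      rw [List.length_eq_zero_iff] at hlen
      rw [hlen]
      exact Dle0Aux.base sh D hD
    | succ n ih =>
      intro l hl hb
      cases l with
      | nil => exact Dle0Aux.base sh D hD
      | cons a s =>
        by_cases ha : a = 0
        · subst ha
          have hs : NP s := fun x hx => hl x (List.mem_cons_of_mem _ hx)
          have hb' : (s.length : ℤ) - s.sum ≤ n := by
            simp only [List.length_cons, List.sum_cons] at hb
            push_cast at hb ⊢
            omega
          have hstep := Dle0Aux.step D (pre 0)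
            (fun b hb => Dle0Aux.coder_pre sh hsh D hD b hb)
            (fun b hb => Or.inr ⟨0 :: b, by
              intro x hx
              rcases List.mem_cons.mp hx with rfl | hx
              · omega
              · exact hb x hx, Dle0Aux.pre_wd 0 b⟩)
            s hs (ih s hs hb')
          rwa [Dle0Aux.pre_wd] at hstep
        · have ha0 : a ≤ 0 := hl a (List.mem_cons_self)
          have hs : NP ((a + 1) :: s) := by
            intro x hx
            rcases List.mem_cons.mp hx with rfl | hx
            · omega
            · exact hl x (List.mem_cons_of_mem _ hx)
          have hb' : ((((a + 1) :: s).length : ℤ)) - ((a + 1) :: s).sum ≤ n := by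
            simp only [List.length_cons, List.sum_cons] at hb ⊢
            push_cast at hb ⊢
            omega
          have hJ' : ∀ b : List ℤ, NP b → Jop (wd b) = 0 ∨ ∃ b', NP b' ∧ Jop (wd b) = wd b' := by
            intro b hb
            cases b with
            | nil => exact Or.inl Dle0Aux.Jop_nil
            | cons c t =>
              refine Or.inr ⟨(c - 1) :: t, ?_, Dle0Aux.Jop_wd c t⟩
              intro x hx
              rcases List.mem_cons.mp hx with rfl | hx
              · have := hb c (List.mem_cons_self); omega
              · exact hb x (List.mem_cons_of_mem _ hx)
          have hstep := Dle0Aux.step D Jop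
            (fun b hb => hD.coder b hb) hJ' ((a + 1) :: s) hs (ih _ hs hb')
          rwa [Dle0Aux.Jop_wd, show a + 1 - 1 = a by ring] at hstep
  have hsum := Dle0Aux.NP_sum l hl
  obtain ⟨_, h2, h3⟩ := key ((l.length : ℤ) - l.sum).toNat l hl (by omega)
  exact ⟨h3, h2⟩


end
end

section
/- The coproduct Δ_{≤0} on H_{≤0} is an algebra homomorphism with respect to the shuffle product: Δ_{≤0}([s] ⧢_{≤0} [t]) = Δ_{≤0}([s]) ⧢_{≤0} Δ_{≤0}([t]) for all words s ∈ Z_{≤0}^m, t ∈ Z_{≤0}^p (m, p ≥ 1). -/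
open Finsupp TensorProduct

noncomputable section

lemma Jop_cons (a : ℤ) (l : List ℤ) : Jop (wd (a :: l)) = wd ((a - 1) :: l) := by
  simp [Jop, wd]

lemma Jop_nil : Jop (wd []) = 0 := by
  simp [Jop, wd]

lemma shT_tmul (sh : W →ₗ[ℚ] W →ₗ[ℚ] W) (a b c d : W) :
    shT sh (a ⊗ₜ[ℚ] b) (c ⊗ₜ[ℚ] d) = sh a c ⊗ₜ[ℚ] sh b d := by
  simp [shT, TensorProduct.mapBilinear]

/-- Span of words with nonpositive entries. -/
def NPspan : Submodule ℚ W := Submodule.span ℚ {w : W | ∃ l, NP l ∧ w = wd l}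

lemma wd_mem_NPspan {l : List ℤ} (h : NP l) : wd l ∈ NPspan :=
  Submodule.subset_span ⟨l, h, rfl⟩

lemma NP_nil : NP ([] : List ℤ) := by intro a ha; simp at ha

lemma NP_cons {a : ℤ} {l : List ℤ} (ha : a ≤ 0) (hl : NP l) : NP (a :: l) := by
  intro b hb
  rcases List.mem_cons.mp hb with h | h
  · exact h ▸ ha
  · exact hl b h

lemma NP_of_cons {a : ℤ} {l : List ℤ} (h : NP (a :: l)) : a ≤ 0 ∧ NP l :=
  ⟨h a (by simp), fun b hb => h b (by simp [hb])⟩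

/-- `shT` is associative. -/
lemma shT_assoc {sh : W →ₗ[ℚ] W →ₗ[ℚ] W} (hsh : IsExtShuffle sh)
    (u v w : W ⊗[ℚ] W) :
    shT sh (shT sh u v) w = shT sh u (shT sh v w) := by
  induction u using TensorProduct.induction_on with
  | zero => simp
  | add x y hx hy => simp [map_add, hx, hy]
  | tmul a b =>
    induction v using TensorProduct.induction_on with
    | zero => simp
    | add x y hx hy => simp [map_add, hx, hy]
    | tmul c d =>
      induction w using TensorProduct.induction_on with
      | zero => simp
      | add x y hx hy => simp [map_add, hx, hy]
      | tmul e f => simp [shT_tmul, hsh.assoc]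

/-- `1 ⊗ 1` is a left unit for `shT`. -/
lemma shT_one {sh : W →ₗ[ℚ] W →ₗ[ℚ] W} (hsh : IsExtShuffle sh) (u : W ⊗[ℚ] W) :
    shT sh (wd [] ⊗ₜ[ℚ] wd []) u = u := by
  induction u using TensorProduct.induction_on with
  | zero => simp
  | add x y hx hy => simp [map_add, hx, hy]
  | tmul c d => simp [shT_tmul, hsh.one_mul]

/-- The coderivation `id ⊗ J + J ⊗ id`. -/
def MT : W ⊗[ℚ] W →ₗ[ℚ] W ⊗[ℚ] W :=
  TensorProduct.map LinearMap.id Jop + TensorProduct.map Jop LinearMap.id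

/-- Tensor-level Leibniz rule. -/
lemma MT_shT {sh : W →ₗ[ℚ] W →ₗ[ℚ] W} (hsh : IsExtShuffle sh)
    (u v : W ⊗[ℚ] W) :
    MT (shT sh u v) = shT sh (MT u) v + shT sh u (MT v) := by
  induction u using TensorProduct.induction_on with
  | zero => simp
  | add x y hx hy =>
      simp only [map_add, LinearMap.add_apply, hx, hy]
      exact add_add_add_comm _ _ _ _
  | tmul a b =>
    induction v using TensorProduct.induction_on with
    | zero => simp
    | add x y hx hy =>
        simp only [map_add, LinearMap.add_apply, hx, hy]
        exact add_add_add_comm _ _ _ _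
    | tmul c d =>
        simp only [shT_tmul, MT, LinearMap.add_apply, TensorProduct.map_tmul,
          LinearMap.id_apply, hsh.leibniz, TensorProduct.tmul_add,
          TensorProduct.add_tmul, map_add, LinearMap.add_apply]
        exact add_add_add_comm _ _ _ _

/-- `J` preserves the span of nonpositive words. -/
lemma Jop_mem_NPspan {z : W} (hz : z ∈ NPspan) : Jop z ∈ NPspan := by
  induction hz using Submodule.span_induction with
  | mem w hw =>
      obtain ⟨l, hl, rfl⟩ := hw
      match l with
      | [] => simp [Jop_nil]
      | a :: l' =>
          rw [Jop_cons]
          exact wd_mem_NPspan (NP_cons (by have := (NP_of_cons hl).1; omega)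
            (NP_of_cons hl).2)
  | zero => simp
  | add x y _ _ hx hy => rw [map_add]; exact add_mem hx hy
  | smul c x _ hx => rw [map_smul]; exact Submodule.smul_mem _ _ hx

/-- Multiplying by `[0]` on the left preserves the span. -/
lemma sh_zero_mem_NPspan {sh : W →ₗ[ℚ] W →ₗ[ℚ] W} (hsh : IsExtShuffle sh)
    {z : W} (hz : z ∈ NPspan) : sh (wd [0]) z ∈ NPspan := by
  induction hz using Submodule.span_induction with
  | mem w hw =>
      obtain ⟨l, hl, rfl⟩ := hw
      rw [hsh.zero_mul_word]
      exact wd_mem_NPspan (NP_cons le_rfl hl)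
  | zero => simp
  | add x y _ _ hx hy => rw [map_add]; exact add_mem hx hy
  | smul c x _ hx => rw [map_smul]; exact Submodule.smul_mem _ _ hx

/-- The measure used for induction: length plus total absolute weight. -/
def mu (l : List ℤ) : ℕ := l.length + (l.map Int.natAbs).sum

/-- Closure: the shuffle of nonpositive words stays in the span. -/
lemma sh_mem_NPspan {sh : W →ₗ[ℚ] W →ₗ[ℚ] W} (hsh : IsExtShuffle sh) :
    ∀ (n : ℕ) (s : List ℤ), mu s = n → NP s → ∀ t : List ℤ, NP t →
      sh (wd s) (wd t) ∈ NPspan := by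
  intro n
  induction n using Nat.strong_induction_on with
  | _ n ih =>
    intro s hn hs t ht
    match s with
    | [] => rw [hsh.one_mul]; exact wd_mem_NPspan ht
    | a :: s' =>
      obtain ⟨ha, hs'⟩ := NP_of_cons hs
      rcases eq_or_lt_of_le ha with ha0 | ha0
      · -- a = 0
        subst hn; subst ha0
        rw [← hsh.zero_mul_word s', hsh.assoc]
        refine sh_zero_mem_NPspan hsh (ih (mu s') ?_ s' rfl hs' t ht)
        simp only [mu, List.length_cons, List.map_cons, List.sum_cons]; omega
      · -- a < 0
        have hx : NP ((a + 1) :: s') := NP_cons (by omega) hs'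
        have hmu : mu ((a + 1) :: s') < n := by
          subst hn; simp only [mu, List.map_cons, List.sum_cons, List.length_cons]
          have : (a + 1).natAbs < a.natAbs := by omega
          omega
        have hJ : Jop (wd ((a + 1) :: s')) = wd (a :: s') := by
          rw [Jop_cons]; norm_num
        have hleib := hsh.leibniz (wd ((a + 1) :: s')) (wd t)
        rw [hJ] at hleib
        have : sh (wd (a :: s')) (wd t)
            = Jop (sh (wd ((a + 1) :: s')) (wd t))
              - sh (wd ((a + 1) :: s')) (Jop (wd t)) := by
          rw [hleib]; abel
        rw [this]
        refine sub_mem (Jop_mem_NPspan (ih _ hmu _ rfl hx t ht)) ?_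
        match t with
        | [] => simp [Jop_nil]
        | b :: t' =>
            rw [Jop_cons]
            exact ih _ hmu _ rfl hx _
              (NP_cons (by have := (NP_of_cons ht).1; omega) (NP_of_cons ht).2)

/-- Coderivation property extended to the span. -/
lemma D_Jop_of_mem {sh : W →ₗ[ℚ] W →ₗ[ℚ] W} {D : W →ₗ[ℚ] W ⊗[ℚ] W}
    (hD : IsDle0 sh D) {z : W} (hz : z ∈ NPspan) :
    D (Jop z) = MT (D z) := by
  induction hz using Submodule.span_induction with
  | mem w hw => obtain ⟨l, hl, rfl⟩ := hw; exact hD.coder l hl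
  | zero => simp
  | add x y _ _ hx hy => simp [map_add, hx, hy]
  | smul c x _ hx => simp [map_smul, hx]

/-- `zeroCons` extended to the span. -/
lemma D_sh_zero_of_mem {sh : W →ₗ[ℚ] W →ₗ[ℚ] W} (hsh : IsExtShuffle sh)
    {D : W →ₗ[ℚ] W ⊗[ℚ] W} (hD : IsDle0 sh D) {z : W} (hz : z ∈ NPspan) :
    D (sh (wd [0]) z) = shT sh (D (wd [0])) (D z) := by
  induction hz using Submodule.span_induction with
  | mem w hw =>
      obtain ⟨l, hl, rfl⟩ := hw
      rw [hsh.zero_mul_word]; exact hD.zeroCons l hl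
  | zero => simp
  | add x y _ _ hx hy => simp [map_add, hx, hy]
  | smul c x _ hx => simp [map_smul, hx]

/-- Main induction. -/
lemma Dle0_aux {sh : W →ₗ[ℚ] W →ₗ[ℚ] W} (hsh : IsExtShuffle sh)
    {D : W →ₗ[ℚ] W ⊗[ℚ] W} (hD : IsDle0 sh D) :
    ∀ (n : ℕ) (s : List ℤ), mu s = n → NP s → s ≠ [] →
      ∀ t : List ℤ, NP t → t ≠ [] →
        D (sh (wd s) (wd t)) = shT sh (D (wd s)) (D (wd t)) := by
  intro n
  induction n using Nat.strong_induction_on with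
  | _ n ih =>
    intro s hn hs hs0 t ht ht0
    match s with
    | [] => exact absurd rfl hs0
    | a :: s' =>
      obtain ⟨ha, hs'⟩ := NP_of_cons hs
      rcases eq_or_lt_of_le ha with ha0 | ha0
      · -- a = 0
        subst hn; subst ha0
        have hkey : D (sh (wd s') (wd t)) = shT sh (D (wd s')) (D (wd t)) := by
          match s' with
          | [] => rw [hsh.one_mul, hD.one, shT_one hsh]
          | c :: s'' =>
              exact ih (mu (c :: s''))
                (by simp only [mu, List.length_cons, List.map_cons,
                      List.sum_cons]; omega)
                _ rfl hs' (by simp) t ht ht0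
        rw [← hsh.zero_mul_word s', hsh.assoc,
          D_sh_zero_of_mem hsh hD (sh_mem_NPspan hsh (mu s') s' rfl hs' t ht),
          hkey, ← shT_assoc hsh, ← hD.zeroCons s' hs', hsh.zero_mul_word]
      · -- a < 0
        subst hn
        have hx : NP ((a + 1) :: s') := NP_cons (by omega) hs'
        have hmu : mu ((a + 1) :: s') < mu (a :: s') := by
          simp only [mu, List.map_cons, List.sum_cons, List.length_cons]
          have : (a + 1).natAbs < a.natAbs := by omega
          omega
        have hJ : Jop (wd ((a + 1) :: s')) = wd (a :: s') := by
          rw [Jop_cons]; norm_num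
        have hleib := hsh.leibniz (wd ((a + 1) :: s')) (wd t)
        rw [hJ] at hleib
        have hsplit : sh (wd (a :: s')) (wd t)
            = Jop (sh (wd ((a + 1) :: s')) (wd t))
              - sh (wd ((a + 1) :: s')) (Jop (wd t)) := by
          rw [hleib]; abel
        match t with
        | [] => exact absurd rfl ht0
        | b :: t' =>
          have hbt : NP ((b - 1) :: t') :=
            NP_cons (by have := (NP_of_cons ht).1; omega) (NP_of_cons ht).2
          have hMT : (TensorProduct.map LinearMap.id Jop
              + TensorProduct.map Jop LinearMap.id : W ⊗[ℚ] W →ₗ[ℚ] W ⊗[ℚ] W)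
              = MT := rfl
          have hDx : MT (D (wd ((a + 1) :: s'))) = D (wd (a :: s')) := by
            rw [← hJ, hD.coder _ hx, hMT]
          rw [hsplit, map_sub,
            D_Jop_of_mem hD (sh_mem_NPspan hsh _ _ rfl hx _ ht),
            ih _ hmu _ rfl hx (by simp) _ ht ht0,
            Jop_cons,
            ih _ hmu _ rfl hx (by simp) _ hbt (by simp),
            ← Jop_cons b t',
            hD.coder _ ht, hMT, MT_shT hsh, hDx]
          exact add_sub_cancel_right _ _

/-- The coproduct `Δ_{≤0}` is an algebra homomorphism with respect to the
shuffle product: `Δ_{≤0}([s] ⧢ [t]) = Δ_{≤0}([s]) ⧢ Δ_{≤0}([t])` for all nonempty words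
with nonpositive entries. -/
theorem Dle0_algebra_hom
    (sh : W →ₗ[ℚ] W →ₗ[ℚ] W) (hsh : IsExtShuffle sh)
    (D : W →ₗ[ℚ] W ⊗[ℚ] W) (hD : IsDle0 sh D)
    (s t : List ℤ) (hs : NP s) (ht : NP t) (hs0 : s ≠ []) (ht0 : t ≠ []) :
    D (sh (wd s) (wd t)) = shT sh (D (wd s)) (D (wd t)) := by
  exact Dle0_aux hsh hD (mu s) s rfl hs hs0 t ht ht0

end
end

section
/- With notation as above for the dual coproduct ⧢_{≤0}* on H_{≤0}^✻: for words (s_1, s) and (u_1, u) with nonpositive entries, if u_1 > s_1 then the structure constant a^{[s_1,s]*}_{[u_1,u]*,[v]*} = 0, i.e. [s_1,s]*([u_1,u] ⧢_{≤0} [v]) = 0. -/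
open Finsupp TensorProduct

noncomputable section

lemma zero_mul_coeff (sh : W →ₗ[ℚ] W →ₗ[ℚ] W) (hsh : IsExtShuffle sh)
    (x : W) (s₁ : ℤ) (s : List ℤ) (h : s₁ ≠ 0) :
    (sh (wd [0]) x) (s₁ :: s) = 0 := by
  induction x using Finsupp.induction_linear with
  | zero => simp
  | add a b ha hb => simp [map_add, Finsupp.add_apply, ha, hb]
  | single l b =>
      have hb : Finsupp.single l b = b • wd l := by simp [wd, Finsupp.smul_single]
      rw [hb, map_smul, hsh.zero_mul_word, Finsupp.smul_apply, wd, Finsupp.single_apply]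
      have : ((0 : ℤ) :: l) ≠ (s₁ :: s) := by
        intro hc; exact h (by injection hc with h1 h2; omega)
      simp [this]

lemma Jop_coeff (y : W) (s₁ : ℤ) (s : List ℤ) :
    (Jop y) (s₁ :: s) = y ((s₁ + 1) :: s) := by
  induction y using Finsupp.induction_linear with
  | zero => simp
  | add a b ha hb => simp [map_add, Finsupp.add_apply, ha, hb]
  | single l b =>
      rw [Jop, Finsupp.lsum_single]
      match l with
      | [] => simp [Finsupp.single_apply]
      | a :: t =>
          simp only [Finsupp.lsingle_apply, Finsupp.single_apply]
          by_cases hc : a = s₁ + 1 ∧ t = s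
      
        
          · obtain ⟨h1, h2⟩ := hc
            subst h1; subst h2
            simp
          · have h1 : ((a - 1) :: t) ≠ (s₁ :: s) := by
              intro hc'; injection hc' with hx hy; exact hc ⟨by omega, hy⟩
            have h2 : (a :: t) ≠ ((s₁ + 1) :: s) := by
              intro hc'; injection hc' with hx hy; exact hc ⟨hx, hy⟩
            simp [h1, h2]

lemma Jop_wd_cons (a : ℤ) (u : List ℤ) : Jop (wd (a :: u)) = wd ((a - 1) :: u) := by
  simp [Jop, wd, Finsupp.lsum_single]

lemma key_vanish (sh : W →ₗ[ℚ] W →ₗ[ℚ] W) (hsh : IsExtShuffle sh) :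
    ∀ (n : ℕ) (s₁ : ℤ) (s u v : List ℤ), s₁ < -(n : ℤ) →
      (sh (wd ((-(n : ℤ)) :: u)) (wd v)) (s₁ :: s) = 0 := by
  intro n
  induction n with
  | zero =>
      intro s₁ s u v h
      have h0 : wd ((-(0:ℤ)) :: u) = sh (wd [0]) (wd u) := by
        rw [hsh.zero_mul_word]; norm_num
      rw [show -((0:ℕ):ℤ) = -(0:ℤ) by norm_num, h0, hsh.assoc]
      exact zero_mul_coeff sh hsh _ s₁ s (by push_cast at h; omega)
  | succ n ih =>
      intro s₁ s u v h
      have hJ : wd ((-((n:ℤ)+1)) :: u) = Jop (wd ((-(n:ℤ)) :: u)) := by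
        rw [Jop_wd_cons]; ring_nf
      have hcast : (-(((n:ℕ)+1 : ℕ) : ℤ)) = -((n:ℤ)+1) := by push_cast; ring
      rw [hcast, hJ]
      have hl := hsh.leibniz (wd ((-(n:ℤ)) :: u)) (wd v)
      have heq : sh (Jop (wd ((-(n:ℤ)) :: u))) (wd v)
          = Jop (sh (wd ((-(n:ℤ)) :: u)) (wd v)) - sh (wd ((-(n:ℤ)) :: u)) (Jop (wd v)) :=
        eq_sub_of_add_eq hl.symm
      rw [heq, Finsupp.sub_apply, Jop_coeff]
      have h1 : (sh (wd ((-(n:ℤ)) :: u)) (wd v)) ((s₁ + 1) :: s) = 0 :=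
        ih (s₁ + 1) s u v (by push_cast at h ⊢; omega)
      rw [h1]
      match v with
      | [] =>
          have : Jop (wd ([] : List ℤ)) = 0 := by simp [Jop, wd, Finsupp.lsum_single]
          simp [this]
      | b :: v' =>
          rw [Jop_wd_cons]
          have h2 := ih s₁ s u ((b - 1) :: v') (by push_cast at h ⊢; omega)
          rw [h2]; ring

/-- If `u₁ > s₁` then the structure constant
`a^{[s₁,s]*}_{[u₁,u]*,[v]*} = [s₁,s]*([u₁,u] ⧢_{≤0} [v])` vanishes. -/
theorem dual_coproduct_coeff_vanish
    (sh : W →ₗ[ℚ] W →ₗ[ℚ] W) (hsh : IsExtShuffle sh)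
    (s₁ u₁ : ℤ) (s u v : List ℤ) (hs : NP (s₁ :: s)) (hu : NP (u₁ :: u)) (hv : NP v)
    (h : s₁ < u₁) :
    (sh (wd (u₁ :: u)) (wd v)) (s₁ :: s) = 0 := by
  have hu1 : u₁ ≤ 0 := hu u₁ (List.mem_cons_self)
  have hn : -(((-u₁).toNat : ℕ) : ℤ) = u₁ := by omega
  have := key_vanish sh hsh (-u₁).toNat s₁ s u v (by omega)
  rwa [hn] at this

end
end

section
/- In H_{≤0}, for any i ≥ 1, any word s with entries ≤ 0, any word (u_1,...,u_m) with entries ≤ 0, and any word (v_1, v) with entries ≤ 0, the shuffle product satisfies [0_i, s]*([u_1,...,u_m] ⧢_{≤0} [v_1, v]) = (−1)^{u_1} [0_i, s]*([0, [u_2,...,u_m] ⧢_{≤0} [v_1+u_1, v]]). Consequently, for the word of k zeros, ⧢_{≤0}*([0_k]*) = Σ_{j=0}^k [0_j]*⊗[0_{k−j}]*. -/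
open Finsupp TensorProduct

noncomputable section

section AuxZeros
lemma Jop_apply_cons (x : W) (c : ℤ) (r : List ℤ) : Jop x (c :: r) = x ((c + 1) :: r) := by
  induction x using Finsupp.induction_linear with
  | zero => simp
  | add f g hf hg => simp [hf, hg]
  | single l q =>
    cases l with
    | nil =>
      simp [Jop, Finsupp.lsum_single, Finsupp.single_apply]
    | cons a s =>
      have h1 : Jop (Finsupp.single (a :: s) q) = Finsupp.single ((a - 1) :: s) q := by
        simp [Jop, Finsupp.lsum_single]
      rw [h1, Finsupp.single_apply, Finsupp.single_apply]
      have hiff : ((a - 1) :: s = c :: r) ↔ (a :: s = (c + 1) :: r) := by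
        simp only [List.cons.injEq]
        constructor <;> rintro ⟨h1, h2⟩ <;> exact ⟨by omega, h2⟩
      rw [if_congr hiff rfl rfl]

lemma pre_apply_cons (z : W) (r : List ℤ) : pre 0 z (0 :: r) = z r := by
  rw [pre, Finsupp.lmapDomain_apply]
  exact Finsupp.mapDomain_apply List.cons_injective z r

lemma pre_apply_ne (z : W) (c : ℤ) (r : List ℤ) (h : c ≠ 0) : pre 0 z (c :: r) = 0 := by
  rw [pre, Finsupp.lmapDomain_apply]
  refine Finsupp.mapDomain_notin_range _ _ ?_
  rintro ⟨l, hl⟩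
  exact h (List.head_eq_of_cons_eq hl.symm)

variable {sh : W →ₗ[ℚ] W →ₗ[ℚ] W}

lemma sh_zero_left (hsh : IsExtShuffle sh) (x : W) : sh (wd [0]) x = pre 0 x := by
  induction x using Finsupp.induction_linear with
  | zero => simp
  | add f g hf hg => simp [hf, hg]
  | single l q =>
    have : (Finsupp.single l q : W) = q • wd l := by simp [wd, Finsupp.smul_single]
    rw [this, map_smul, map_smul, hsh.zero_mul_word]
    simp [pre, wd, Finsupp.mapDomain_single]

lemma sh_cons_zero (hsh : IsExtShuffle sh) (u : List ℤ) (y : W) :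
    sh (wd (0 :: u)) y = pre 0 (sh (wd u) y) := by
  rw [← hsh.zero_mul_word u, hsh.assoc, sh_zero_left hsh]

lemma shuffle_pos_head_zero (hsh : IsExtShuffle sh) (u v : List ℤ) :
    ∀ n : ℕ, ∀ b c : ℤ, b ≤ 0 → 1 ≤ c → ∀ r : List ℤ,
      sh (wd ((-(n : ℤ)) :: u)) (wd (b :: v)) (c :: r) = 0 := by
  intro n
  induction n with
  | zero =>
    intro b c hb hc r
    rw [show (-(0:ℕ) : ℤ) = 0 by norm_num, sh_cons_zero hsh, pre_apply_ne _ c r (by omega)]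
  | succ n ih =>
    intro b c hb hc r
    have hl := hsh.leibniz (wd ((-(n : ℤ)) :: u)) (wd (b :: v))
    rw [Jop_wd_cons, Jop_wd_cons] at hl
    have h := congrArg (fun z : W => z (c :: r)) hl
    simp only [Finsupp.add_apply] at h
    rw [Jop_apply_cons, ih b (c + 1) hb (by omega) r, ih (b - 1) c (by omega) hc r] at h
    have h2 : (-((n:ℕ)+1 : ℕ) : ℤ) = -(n : ℤ) - 1 := by push_cast; ring
    rw [h2]
    linarith [h]

lemma key1 (hsh : IsExtShuffle sh) (u v : List ℤ) :
    ∀ n : ℕ, ∀ b : ℤ, b ≤ 0 → ∀ r : List ℤ,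
      sh (wd ((-(n : ℤ)) :: u)) (wd (b :: v)) (0 :: r)
        = (-1 : ℚ) ^ (-(n : ℤ)) * sh (wd u) (wd ((b + -(n : ℤ)) :: v)) r := by
  intro n
  induction n with
  | zero =>
    intro b hb r
    rw [show (-(0:ℕ) : ℤ) = 0 by norm_num, sh_cons_zero hsh, pre_apply_cons]
    simp
  | succ n ih =>
    intro b hb r
    have hl := hsh.leibniz (wd ((-(n : ℤ)) :: u)) (wd (b :: v))
    rw [Jop_wd_cons, Jop_wd_cons] at hl
    have h := congrArg (fun z : W => z (0 :: r)) hl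
    simp only [Finsupp.add_apply] at h
    rw [Jop_apply_cons, shuffle_pos_head_zero hsh u v n b (0 + 1) hb (by omega) r,
      ih (b - 1) (by omega) r] at h
    have h2 : (-((n:ℕ)+1 : ℕ) : ℤ) = -(n : ℤ) - 1 := by push_cast; ring
    have h3 : (-1 : ℚ) ^ (-(n : ℤ) - 1) = -((-1 : ℚ) ^ (-(n : ℤ))) := by
      rw [zpow_sub_one₀ (by norm_num : (-1 : ℚ) ≠ 0)]
      norm_num
    have h4 : b - 1 + -(n : ℤ) = b + (-(n : ℤ) - 1) := by ring
    rw [h2, h3]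
    rw [h4] at h
    linarith [h]
-- AUX END

lemma part1 (hsh : IsExtShuffle sh) (a b : ℤ) (ha : a ≤ 0) (hb : b ≤ 0) (u v r : List ℤ) :
    sh (wd (a :: u)) (wd (b :: v)) (0 :: r)
      = (-1 : ℚ) ^ a * sh (wd u) (wd ((b + a) :: v)) r := by
  obtain ⟨n, rfl⟩ : ∃ n : ℕ, a = -(n : ℤ) := ⟨(-a).toNat, by omega⟩
  exact key1 hsh u v n b hb r

lemma part2 (hsh : IsExtShuffle sh) :
    ∀ u : List ℤ, ∀ (v : List ℤ) (k : ℕ), NP u → NP v →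
      (sh (wd u) (wd v)) (List.replicate k 0)
        = ∑ j ∈ Finset.range (k + 1),
            if u = List.replicate j (0 : ℤ) ∧ v = List.replicate (k - j) (0 : ℤ)
            then (1 : ℚ) else 0 := by
  intro u
  induction u with
  | nil =>
    intro v k _ _
    rw [hsh.one_mul]
    rw [Finset.sum_eq_single_of_mem 0 (Finset.mem_range.mpr (by omega))
      (fun j _ hj => by
        rw [if_neg]
        rintro ⟨h1, -⟩
        have := congrArg List.length h1
        simp at this
        omega)]
    simp only [List.replicate_zero, Nat.sub_zero, true_and]
    rw [wd, Finsupp.single_apply]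
  | cons u₁ u' ih =>
    intro v k hu hv
    have hu₁ : u₁ ≤ 0 := hu u₁ (List.mem_cons_self)
    have hu' : NP u' := fun a ha => hu a (List.mem_cons_of_mem _ ha)
    cases v with
    | nil =>
      rw [hsh.mul_one]
      rw [Finset.sum_eq_single_of_mem k (Finset.mem_range.mpr (by omega))
        (fun j hj hjk => by
          have hjr := Finset.mem_range.mp hj
          rw [if_neg]
          rintro ⟨-, h2⟩
          have := congrArg List.length h2
          simp at this
          omega)]
      simp only [Nat.sub_self, List.replicate_zero, and_true]
      rw [wd, Finsupp.single_apply]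
    | cons v₁ v'' =>
      have hv₁ : v₁ ≤ 0 := hv v₁ (List.mem_cons_self)
      have hv'' : NP v'' := fun a ha => hv a (List.mem_cons_of_mem _ ha)
      cases k with
      | zero =>
        rw [show List.replicate 0 (0:ℤ) = [] from rfl]
        rw [hsh.graded _ _ _ (by simp only [List.length_nil, List.length_cons]; omega)]
        simp
      | succ k' =>
        rw [List.replicate_succ, part1 hsh u₁ v₁ hu₁ hv₁ u' v'' _,
          ih ((v₁ + u₁) :: v'') k' hu' (by
            intro a ha
            rcases List.mem_cons.mp ha with h | h
            · omega
            · exact hv'' a h)]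
        rw [Finset.sum_range_succ' _ (k' + 1)]
        have hzero : (if u₁ :: u' = List.replicate 0 (0:ℤ) ∧
            (v₁ :: v'' : List ℤ) = List.replicate (k' + 1 - 0) 0 then (1:ℚ) else 0) = 0 := by
          rw [if_neg]; rintro ⟨h, -⟩; simp at h
        rw [hzero, add_zero, Finset.mul_sum]
        refine Finset.sum_congr rfl fun j hj => ?_
        have hsub : k' + 1 - (j + 1) = k' - j := by omega
        rw [hsub]
        by_cases h0 : u₁ = 0
        · subst h0
          rw [zpow_zero, one_mul, add_zero]
          refine if_congr ?_ rfl rfl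
          rw [List.replicate_succ]
          simp [List.cons.injEq]
        · rw [if_neg, if_neg, mul_zero]
          · rintro ⟨h1, -⟩
            rw [List.replicate_succ] at h1
            exact h0 (List.head_eq_of_cons_eq h1)
          · rintro ⟨-, h2⟩
            cases hkj : k' - j with
            | zero => rw [hkj] at h2; simp at h2
            | succ m =>
              rw [hkj, List.replicate_succ] at h2
              have := List.head_eq_of_cons_eq h2
              omega

end AuxZeros

/-- For `i ≥ 1`, the coefficient identity
`[0_i,s]*([u₁,…,u_m] ⧢ [v₁,v]) = (-1)^{u₁} [0_i,s]*([0, [u₂,…,u_m] ⧢ [v₁+u₁,v]])`, and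
consequently `⧢_{≤0}*([0_k]*) = Σ_{j=0}^k [0_j]* ⊗ [0_{k-j}]*`. -/
theorem zeros_dual_coproduct
    (sh : W →ₗ[ℚ] W →ₗ[ℚ] W) (hsh : IsExtShuffle sh) :
    (∀ i : ℕ, 1 ≤ i → ∀ (s : List ℤ), NP s →
      ∀ (u₁ : ℤ) (u' : List ℤ), NP (u₁ :: u') → ∀ (v₁ : ℤ) (v : List ℤ), NP (v₁ :: v) →
      (sh (wd (u₁ :: u')) (wd (v₁ :: v))) (List.replicate i 0 ++ s)
        = ((-1 : ℚ) ^ u₁) *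
          (pre 0 (sh (wd u') (wd ((v₁ + u₁) :: v)))) (List.replicate i 0 ++ s))
    ∧ (∀ k : ℕ, ∀ u v : List ℤ, NP u → NP v →
      (sh (wd u) (wd v)) (List.replicate k 0)
        = ∑ j ∈ Finset.range (k + 1),
            if u = List.replicate j (0 : ℤ) ∧ v = List.replicate (k - j) (0 : ℤ)
            then (1 : ℚ) else 0) := by
  constructor
  · intro i hi s _ u₁ u' hu v₁ v hv
    obtain ⟨i', rfl⟩ : ∃ i', i = i' + 1 := ⟨i - 1, by omega⟩
    rw [List.replicate_succ, List.cons_append,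
      part1 hsh u₁ v₁ (hu u₁ (List.mem_cons_self)) (hv v₁ (List.mem_cons_self)),
      pre_apply_cons]
  · intro k u v hu hv
    exact part2 hsh u v k hu hv

end
end
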